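/- arXiv:2512.02229 — 2 statements merged into one kernel-verified Lean document; each statement's English description precedes it below -/
import Mathlib

section
/- For all t ≥ 0 and s ≥ e^{1/4}, one has s·t ≤ (e^{t²} − 1) + s·(log s)^{1/2}. -/
open Real

/-- Beyond `u` the convexity bound `exp (t² - u²) ≥ 1 + (t² - u²)` applies, and `t + u ≥ 1` turns
`t² - u²` into at least `t - u`. -/
lemma exp_sq_mul_sub_le_exp_sq_sub_one {t u : ℝ} (hu : 1 / 2 ≤ u) :
    exp (u ^ 2) * (t - u) ≤ exp (t ^ 2) - 1 := by
  have hexp_u : 1 ≤ exp (u ^ 2) := one_le_exp (sq_nonneg u)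
  rcases le_or_gt t u with htu | htu
  · nlinarith [one_le_exp (sq_nonneg t)]
  · have hsq : t - u ≤ t ^ 2 - u ^ 2 := by nlinarith
    calc exp (u ^ 2) * (t - u)
        ≤ exp (u ^ 2) * (t ^ 2 - u ^ 2 + 1) - 1 := by nlinarith
      _ ≤ exp (u ^ 2) * exp (t ^ 2 - u ^ 2) - 1 := by
          gcongr; linarith [add_one_le_exp (t ^ 2 - u ^ 2)]
      _ = exp (t ^ 2) - 1 := by rw [← exp_add, add_sub_cancel]

theorem stmt_0_general (s t : ℝ) (hs : Real.exp (1/4) ≤ s) :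
    s * t ≤ (Real.exp (t ^ 2) - 1) + s * Real.sqrt (Real.log s) := by
  have hs0 : 0 < s := (exp_pos _).trans_le hs
  have hlog : 1 / 4 ≤ log s := (le_log_iff_exp_le hs0).2 hs
  set u := √(log s)
  have hu : 1 / 2 ≤ u := le_sqrt_of_sq_le (by linarith)
  have hs_eq : s = exp (u ^ 2) := by
    rw [sq_sqrt (by linarith), exp_log hs0]
  have key := exp_sq_mul_sub_le_exp_sq_sub_one (t := t) hu
  rw [← hs_eq] at key
  linarith

theorem stmt_0 (s t : ℝ) (ht : 0 ≤ t) (hs : Real.exp (1/4) ≤ s) :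
    s * t ≤ (Real.exp (t ^ 2) - 1) + s * Real.sqrt (Real.log s) :=
  stmt_0_general s t hs
end

section
/- Suppose f : ℝ → ℝ is continuous, f(t)/t → 0 as t → 0, and f(t)/e^{β t²} → 0 as t → +∞ for some β > 0. Then for every ε > 0 and every δ ≥ 1 there exists c = c(ε, δ) > 0 such that |f(t)| ≤ ε|t| + c|t|^δ (e^{β t²} − 1) for all t ≥ 0. -/
/-!
Near `0` the hypothesis `f t / t → 0` gives `|f t| ≤ ε|t|` directly. Away from `0` the weight
`|t|^δ (e^{βt²} − 1)` is continuous and positive, and it dominates `e^{βt²}`, hence `f`, at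
infinity; a continuous function that is `O` of such a weight at infinity is `O` of it on the
whole half-line, by compactness of the remaining bounded interval.
-/

open Filter Real Set Topology Asymptotics

theorem ContinuousOn.isBigO_principal_Ici_of_isBigO_atTop {α E F : Type*} [LinearOrder α]
    [TopologicalSpace α] [CompactIccSpace α] [SeminormedAddGroup E] [NormedAddCommGroup F]
    {f : α → E} {g : α → F} {a : α} (hf : ContinuousOn f (Ici a)) (hg : ContinuousOn g (Ici a))
    (hg0 : ∀ x ∈ Ici a, g x ≠ 0) (hfg : f =O[atTop] g) : f =O[𝓟 (Ici a)] g := by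
  have : Nonempty α := ⟨a⟩
  obtain ⟨C, hC⟩ := hfg.bound
  obtain ⟨N, hN⟩ := eventually_atTop.mp hC
  have htail : f =O[𝓟 (Ici (max a N))] g :=
    isBigO_principal.mpr ⟨C, fun x hx => hN x (le_of_max_le_right hx)⟩
  have hcompact : f =O[𝓟 (Icc a (max a N))] g :=
    (hf.mono Icc_subset_Ici_self).isBigO_principal isCompact_Icc (by norm_num : ‖(1 : ℝ)‖ ≠ 0)
      |>.trans ((hg.mono Icc_subset_Ici_self).isBigO_rev_principal isCompact_Icc
        (fun x hx => hg0 x hx.1) (1 : ℝ))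
  simpa [sup_principal, Icc_union_Ici_eq_Ici (le_max_left a N)] using hcompact.sup htail

theorem isLittleO_nhds_zero_of_tendsto_div {f : ℝ → ℝ} (hf : ContinuousAt f 0)
    (h0 : Tendsto (fun t => f t / t) (𝓝[≠] 0) (𝓝 0)) : f =o[𝓝 0] id := by
  have ho : f =o[𝓝[≠] 0] id :=
    (isLittleO_iff_tendsto' (eventually_nhdsWithin_of_forall fun t ht h => absurd h ht)).mpr h0
  have hf0 : f 0 = 0 :=
    tendsto_nhds_unique (hf.tendsto.mono_left nhdsWithin_le_nhds)
      (ho.trans_tendsto (tendsto_id.mono_left nhdsWithin_le_nhds))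
  exact nhdsNE_sup_pure (0 : ℝ) ▸ ho.sup (isLittleO_pure.mpr hf0)

section Weight

variable {β δ : ℝ}

theorem rpow_abs_mul_exp_mul_sq_sub_one_nonneg (hβ : 0 ≤ β) (t : ℝ) :
    0 ≤ |t| ^ δ * (exp (β * t ^ 2) - 1) :=
  mul_nonneg (by positivity) (sub_nonneg.mpr (one_le_exp (by positivity)))

theorem rpow_abs_mul_exp_mul_sq_sub_one_pos (hβ : 0 < β) {t : ℝ} (ht : t ≠ 0) :
    0 < |t| ^ δ * (exp (β * t ^ 2) - 1) :=
  mul_pos (rpow_pos_of_pos (abs_pos.mpr ht) δ) (sub_pos.mpr (one_lt_exp_iff.mpr (by positivity)))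

theorem continuous_rpow_abs_mul_exp_mul_sq_sub_one (hδ : 0 ≤ δ) :
    Continuous fun t : ℝ => |t| ^ δ * (exp (β * t ^ 2) - 1) :=
  (continuous_abs.rpow_const fun _ => Or.inr hδ).mul (by fun_prop)

theorem exp_mul_sq_isBigO_rpow_abs_mul_exp_mul_sq_sub_one (hβ : 0 < β) (hδ : 0 ≤ δ) :
    (fun t => exp (β * t ^ 2)) =O[atTop] fun t => |t| ^ δ * (exp (β * t ^ 2) - 1) := by
  have hexp : Tendsto (fun t : ℝ => exp (β * t ^ 2)) atTop atTop :=
    tendsto_exp_atTop.comp ((tendsto_pow_atTop two_ne_zero).const_mul_atTop hβ)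
  refine IsBigO.of_bound 2 ?_
  filter_upwards [eventually_ge_atTop 1, hexp.eventually_ge_atTop 2] with t ht1 ht2
  have hpow : 1 ≤ |t| ^ δ := one_le_rpow (by rwa [abs_of_nonneg (by linarith)]) hδ
  rw [norm_of_nonneg (exp_pos _).le, norm_of_nonneg (mul_nonneg (by linarith) (by linarith))]
  nlinarith

end Weight

/-- one-variable version of Lemma 4.1: subcritical exponential growth
plus vanishing at 0 gives the estimate `|f t| ≤ ε|t| + c|t|^δ (e^{βt²} − 1)` for `t ≥ 0`. -/
theorem stmt_8 (f : ℝ → ℝ) (hf : Continuous f) (β : ℝ) (hβ : 0 < β)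
    (h0 : Filter.Tendsto (fun t => f t / t) (nhdsWithin 0 {0}ᶜ) (nhds 0))
    (hinf : Filter.Tendsto (fun t => f t / Real.exp (β * t ^ 2)) Filter.atTop (nhds 0)) :
    ∀ ε > 0, ∀ δ ≥ (1 : ℝ), ∃ c > 0, ∀ t ≥ (0 : ℝ),
      |f t| ≤ ε * |t| + c * |t| ^ δ * (Real.exp (β * t ^ 2) - 1) := by
  intro ε hε δ hδ
  let w : ℝ → ℝ := fun t => |t| ^ δ * (exp (β * t ^ 2) - 1)
  obtain ⟨d, hd, hnear⟩ := Metric.eventually_nhds_iff.mp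
    ((isLittleO_nhds_zero_of_tendsto_div hf.continuousAt h0).def hε)
  have hfar : f =O[atTop] w :=
    ((isLittleO_iff_tendsto fun t h => absurd h (exp_pos _).ne').mpr hinf).isBigO.trans
      (exp_mul_sq_isBigO_rpow_abs_mul_exp_mul_sq_sub_one hβ (by linarith))
  obtain ⟨C, hC⟩ := isBigO_principal.mp <| hf.continuousOn.isBigO_principal_Ici_of_isBigO_atTop
    (continuous_rpow_abs_mul_exp_mul_sq_sub_one (by linarith)).continuousOn
    (fun t ht => (rpow_abs_mul_exp_mul_sq_sub_one_pos hβ (hd.trans_le ht).ne').ne') hfar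
  refine ⟨max C 1, by positivity, fun t ht => ?_⟩
  have hw : 0 ≤ w t := rpow_abs_mul_exp_mul_sq_sub_one_nonneg hβ.le t
  rw [mul_assoc]
  rcases lt_or_ge t d with htd | htd
  · have hft : |f t| ≤ ε * |t| := by simpa using hnear (by simpa [abs_of_nonneg ht] : dist t 0 < d)
    nlinarith [le_max_right C 1]
  · have hft := hC t htd
    rw [norm_eq_abs, norm_of_nonneg hw] at hft
    nlinarith [le_max_left C 1, abs_nonneg t]
end
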